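/- arXiv:2512.19154 — 2 statements merged into one kernel-verified Lean document; each statement's English description precedes it below -/
import Mathlib

section
/- Partial-order preservation (Theorem 2): For i = 1, 2 let p_i : S → PMF H be the conditional distribution over latent full histories given a memory state induced by policy i, let V_i : H → ℝ be the full-history value function of policy i, and let W_i(s) = Σ_h (p_i s h) · V_i h be the induced memory-state value. Assume (i) value-consistency of both representations: for every s ∈ S and all h, h' in the support of p_i s one has V_i h = V_i h' (for i = 1 and i = 2); (ii) coverage: for every h ∈ H there exists s ∈ S with h in the support of both p_1 s and p_2 s; and (iii) W_1 s ≤ W_2 s for all s ∈ S. Then V_1 h ≤ V_2 h for all h ∈ H. -/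
private lemma pmf_const_sum {H : Type*} [Fintype H] (p : PMF H) (V : H → ℝ) (h₀ : H)
    (h0 : 0 < p h₀) (hvc : ∀ h h', 0 < p h → 0 < p h' → V h = V h') :
    ∑ h, (p h).toReal * V h = V h₀ := by
  have hsum : ∑ h, (p h).toReal = 1 := by
    have := p.tsum_coe
    rw [tsum_fintype] at this
    have : (∑ h, p h).toReal = (1 : ENNReal).toReal := by rw [this]
    simpa [ENNReal.toReal_sum (fun h _ => p.apply_ne_top h)] using this
  calc ∑ h, (p h).toReal * V h = ∑ h, (p h).toReal * V h₀ := by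
        apply Finset.sum_congr rfl
        intro h _
        rcases eq_or_lt_of_le (zero_le : 0 ≤ p h) with hz | hp
        · simp [← hz]
        · rw [hvc h h₀ hp h0]
    _ = V h₀ := by rw [← Finset.sum_mul, hsum, one_mul]

/-- Partial-order preservation (Theorem 2): if both memory representations are
value-consistent, every history is covered by some memory state under both policies,
and the induced memory-state values satisfy `W₁ ≤ W₂` pointwise, then the full-history
values satisfy `V₁ ≤ V₂` pointwise. -/
theorem partial_order_preserving
    {H S : Type*} [Fintype H] [Nonempty H]
    (p₁ p₂ : S → PMF H) (V₁ V₂ : H → ℝ)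
    (W₁ W₂ : S → ℝ)
    (hW₁ : ∀ s, W₁ s = ∑ h, ((p₁ s) h).toReal * V₁ h)
    (hW₂ : ∀ s, W₂ s = ∑ h, ((p₂ s) h).toReal * V₂ h)
    (hvc₁ : ∀ s, ∀ h h', 0 < (p₁ s) h → 0 < (p₁ s) h' → V₁ h = V₁ h')
    (hvc₂ : ∀ s, ∀ h h', 0 < (p₂ s) h → 0 < (p₂ s) h' → V₂ h = V₂ h')
    (hcov : ∀ h, ∃ s, 0 < (p₁ s) h ∧ 0 < (p₂ s) h)
    (hle : ∀ s, W₁ s ≤ W₂ s) :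
    ∀ h, V₁ h ≤ V₂ h := by
  intro h
  obtain ⟨s, h1, h2⟩ := hcov h
  have e1 : W₁ s = V₁ h := by rw [hW₁ s]; exact pmf_const_sum _ _ _ h1 (hvc₁ s)
  have e2 : W₂ s = V₂ h := by rw [hW₂ s]; exact pmf_const_sum _ _ _ h2 (hvc₂ s)
  rw [← e1, ← e2]; exact hle s
end

section
/- Equality version of Theorem 2: For i = 1, 2 let p_i : S → PMF H be the conditional distribution over latent full histories given a memory state induced by policy i, let V_i : H → ℝ be the full-history value function of policy i, and let W_i(s) = Σ_h (p_i s h) · V_i h be the induced memory-state value. Assume (i) value-consistency of both representations: for every s ∈ S and all h, h' in the support of p_i s one has V_i h = V_i h' (for i = 1 and i = 2); (ii) coverage: for every h ∈ H there exists s ∈ S with h in the support of both p_1 s and p_2 s; and (iii) W_1 s = W_2 s for all s ∈ S. Then V_1 h = V_2 h for all h ∈ H. -/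
lemma pmf_weighted_sum_eq {H : Type*} [Fintype H] (p : PMF H) (V : H → ℝ) (h₀ : H)
    (hpos : 0 < p h₀) (hvc : ∀ h h', 0 < p h → 0 < p h' → V h = V h') :
    ∑ h, (p h).toReal * V h = V h₀ := by
  have hsum : ∑ h, (p h).toReal = 1 := by
    have := p.tsum_coe
    rw [tsum_fintype] at this
    have : (∑ h, p h).toReal = (1 : ENNReal).toReal := by rw [this]
    simpa [ENNReal.toReal_sum (fun h _ => p.apply_ne_top h)] using this
  calc ∑ h, (p h).toReal * V h = ∑ h, (p h).toReal * V h₀ := by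
        apply Finset.sum_congr rfl
        intro h _
        rcases eq_or_lt_of_le (zero_le : 0 ≤ p h) with hz | hpos'
        · simp [← hz]
        · rw [hvc h h₀ hpos' hpos]
    _ = V h₀ := by rw [← Finset.sum_mul, hsum, one_mul]

/-- Equality version of Theorem 2: under value-consistency of both representations and
coverage, equality of the induced memory-state values implies equality of the
full-history values. -/
theorem value_equality_preserving
    {H S : Type*} [Fintype H] [Nonempty H]
    (p₁ p₂ : S → PMF H) (V₁ V₂ : H → ℝ)
    (W₁ W₂ : S → ℝ)
    (hW₁ : ∀ s, W₁ s = ∑ h, ((p₁ s) h).toReal * V₁ h)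
    (hW₂ : ∀ s, W₂ s = ∑ h, ((p₂ s) h).toReal * V₂ h)
    (hvc₁ : ∀ s, ∀ h h', 0 < (p₁ s) h → 0 < (p₁ s) h' → V₁ h = V₁ h')
    (hvc₂ : ∀ s, ∀ h h', 0 < (p₂ s) h → 0 < (p₂ s) h' → V₂ h = V₂ h')
    (hcov : ∀ h, ∃ s, 0 < (p₁ s) h ∧ 0 < (p₂ s) h)
    (heq : ∀ s, W₁ s = W₂ s) :
    ∀ h, V₁ h = V₂ h := by
  intro h
  obtain ⟨s, h1, h2⟩ := hcov h
  have e1 : W₁ s = V₁ h := by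
    rw [hW₁ s]; exact pmf_weighted_sum_eq _ _ _ h1 (hvc₁ s)
  have e2 : W₂ s = V₂ h := by
    rw [hW₂ s]; exact pmf_weighted_sum_eq _ _ _ h2 (hvc₂ s)
  rw [← e1, ← e2, heq]
end
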